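/- Let V : ℝ → M_d(ℂ) be T-periodic, and let U_0(t) be a time evolution such that U_0(t + lT) = U_0(t) X^l for a unitary X with X^N = 1 (for 0 ≤ t < T, l ∈ ℤ). Define V_m = (1/(NT)) ∫_0^{NT} U_0(t)^† V(t) U_0(t) e^{imωt/N} dt with ω = 2π/T. Then X V_m X^{-1} = e^{2πim/N} V_m. -/

import Mathlib

set_option autoImplicit false
open Complex Real

/-!
Since `U₀(t - T) = U₀(t) X⁻¹` and `V(t - T) = V(t)`, the conjugated potential at `t - T` is
`X (U₀(t)† V(t) U₀(t)) X⁻¹`, while the Fourier kernel picks up the factor `e^{2πim/N}` under the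
same shift. As `X^N = 1`, the whole integrand is `NT`-periodic, so its integral over one period is
invariant under the shift by `T`, and conjugation by `X` passes through the integral.
-/

section TwistedPeriodic

variable {M : Type*} [Monoid M] {f : ℝ → M} {T : ℝ} {X : Mˣ}

lemma apply_add_int_mul_of_forall_Ico (hT : 0 < T)
    (h : ∀ t, 0 ≤ t → t < T → ∀ l : ℤ, f (t + l * T) = f t * ↑(X ^ l)) (s : ℝ) (l : ℤ) :
    f (s + l * T) = f s * ↑(X ^ l) := by
  obtain ⟨r, k, hr₀, hrT, rfl⟩ : ∃ (r : ℝ) (k : ℤ), 0 ≤ r ∧ r < T ∧ s = r + k * T := by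
    obtain ⟨hr₀, hrT⟩ := toIcoMod_mem_Ico' hT s
    refine ⟨_, toIcoDiv hT 0 s, hr₀, hrT, ?_⟩
    simpa only [zsmul_eq_mul] using (toIcoMod_add_toIcoDiv_zsmul hT 0 s).symm
  rw [show r + k * T + l * T = r + ↑(k + l) * T by push_cast; ring, h r hr₀ hrT, h r hr₀ hrT,
    zpow_add, Units.val_mul, mul_assoc]

end TwistedPeriodic

section Conjugation

variable {M : Type*} [Monoid M] [StarMul M] {U V : ℝ → M} {T : ℝ} {X : Mˣ}

lemma star_mul_mul_sub_period (hV : Function.Periodic V T)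
    (hU : ∀ s (l : ℤ), U (s + l * T) = U s * ↑(X ^ l)) (hX : star (X : M) = ↑X⁻¹) (t : ℝ) :
    star (U (t - T)) * V (t - T) * U (t - T) = X * (star (U t) * V t * U t) * ↑X⁻¹ := by
  have hUsub : U (t - T) = U t * ↑X⁻¹ := by
    simpa [sub_eq_add_neg] using hU t (-1)
  have hXinv : star (↑X⁻¹ : M) = X := by rw [← hX, star_star]
  rw [hUsub, hV.sub_eq, star_mul, hXinv]
  simp only [mul_assoc]

lemma periodic_star_mul_mul {N : ℕ} (hV : Function.Periodic V T)
    (hU : ∀ s (l : ℤ), U (s + l * T) = U s * ↑(X ^ l)) (hXN : (X : M) ^ N = 1) :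
    Function.Periodic (fun t ↦ star (U t) * V t * U t) (N * T) := by
  intro t
  have hUN : U (t + N * T) = U t := by
    simpa [hXN] using hU t N
  simp only [hUN, (hV.nat_mul N) t]

end Conjugation

section Integral

variable {A : Type*} [NormedRing A] [NormedAlgebra ℂ A] [CompleteSpace A]

-- No integrability is needed: if `f` is not integrable, neither is its conjugate, and both
-- integrals are the junk value `0`.
lemma intervalIntegral_units_conj (u : Aˣ) (f : ℝ → A) (a b : ℝ) :
    ∫ t in a..b, (u : A) * f t * ↑u⁻¹ = u * (∫ t in a..b, f t) * ↑u⁻¹ := by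
  by_cases hf : IntervalIntegrable f MeasureTheory.volume a b
  · exact (ContinuousLinearMap.mulLeftRight ℂ A (u : A) ↑u⁻¹).intervalIntegral_comp_comm hf
  · have hconj : ¬ IntervalIntegrable (fun t ↦ (u : A) * f t * ↑u⁻¹) MeasureTheory.volume a b :=
      fun h ↦ hf <| by simpa [mul_assoc] using (h.const_mul (↑u⁻¹ : A)).mul_const (u : A)
    rw [intervalIntegral.integral_undef hf, intervalIntegral.integral_undef hconj, mul_zero,
      zero_mul]

lemma Function.Periodic.units_conj_intervalIntegral_eq_smul {g : ℝ → A} {P : ℝ}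
    (hg : Function.Periodic g P) (u : Aˣ) (ζ : ℂ) (T : ℝ)
    (hcov : ∀ t, u * g t * ↑u⁻¹ = ζ • g (t - T)) (a : ℝ) :
    u * (∫ t in a..a + P, g t) * ↑u⁻¹ = ζ • ∫ t in a..a + P, g t := by
  rw [← intervalIntegral_units_conj, funext hcov, intervalIntegral.integral_smul,
    intervalIntegral.integral_comp_sub_right, add_sub_right_comm, hg.intervalIntegral_add_eq]

end Integral

lemma exp_mul_div_periodic {N : ℕ} (hN : N ≠ 0) {T : ℝ} (hT : T ≠ 0) (m : ℤ) :
    Function.Periodic (fun t : ℝ ↦ exp (I * m * (2 * π / T) * t / N)) (N * T) := by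
  intro t
  have hT' : (T : ℂ) ≠ 0 := ofReal_ne_zero.mpr hT
  have hN' : (N : ℂ) ≠ 0 := Nat.cast_ne_zero.mpr hN
  have hexp : I * m * (2 * π / T) * ((t : ℂ) + N * T) / N
      = I * m * (2 * π / T) * t / N + m * (2 * π * I) := by
    field_simp
  simp only [ofReal_add, ofReal_mul, ofReal_natCast, hexp, Complex.exp_add,
    exp_int_mul_two_pi_mul_I, mul_one]

lemma exp_mul_div_eq_mul_sub {T : ℝ} (hT : T ≠ 0) (N : ℕ) (m : ℤ) (t : ℝ) :
    exp (I * m * (2 * π / T) * t / N) =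
      exp (2 * π * I * m / N) * exp (I * m * (2 * π / T) * (t - T : ℝ) / N) := by
  have hT' : (T : ℂ) ≠ 0 := ofReal_ne_zero.mpr hT
  rw [← Complex.exp_add]
  congr 1
  push_cast
  field_simp
  ring

theorem fourier_component_covariance_general {d : ℕ} (N : ℕ) (hN : 0 < N) (T : ℝ) (hT : 0 < T)
    (V U₀ : ℝ → (EuclideanSpace ℂ (Fin d) →L[ℂ] EuclideanSpace ℂ (Fin d)))
    (hVper : ∀ t, V (t + T) = V t)
    (X : (EuclideanSpace ℂ (Fin d) →L[ℂ] EuclideanSpace ℂ (Fin d))ˣ)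
    (hXunitary : star (X : EuclideanSpace ℂ (Fin d) →L[ℂ] EuclideanSpace ℂ (Fin d)) = ↑X⁻¹)
    (hXN : (X : EuclideanSpace ℂ (Fin d) →L[ℂ] EuclideanSpace ℂ (Fin d)) ^ N = 1)
    (hU₀ : ∀ t : ℝ, 0 ≤ t → t < T → ∀ l : ℤ,
      U₀ (t + l * T) = U₀ t * ((X ^ l : (EuclideanSpace ℂ (Fin d) →L[ℂ] EuclideanSpace ℂ (Fin d))ˣ) :
        EuclideanSpace ℂ (Fin d) →L[ℂ] EuclideanSpace ℂ (Fin d)))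
    (m : ℤ) :
    (X : EuclideanSpace ℂ (Fin d) →L[ℂ] EuclideanSpace ℂ (Fin d)) *
        ((1 / (N * T : ℂ)) • ∫ t in (0:ℝ)..(N * T),
          Complex.exp (I * m * (2 * π / T) * t / N) • (star (U₀ t) * V t * U₀ t)) * ↑X⁻¹ =
      Complex.exp (2 * π * I * m / N) •
        ((1 / (N * T : ℂ)) • ∫ t in (0:ℝ)..(N * T),
          Complex.exp (I * m * (2 * π / T) * t / N) • (star (U₀ t) * V t * U₀ t)) := by
  have hU := apply_add_int_mul_of_forall_Ico hT hU₀
  have hper : Function.Periodic (fun t : ℝ ↦ exp (I * m * (2 * π / T) * t / N) •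
      (star (U₀ t) * V t * U₀ t)) (N * T) := fun t ↦ by
    simp only [exp_mul_div_periodic hN.ne' hT.ne' m t, periodic_star_mul_mul hVper hU hXN t]
  have hcov := hper.units_conj_intervalIntegral_eq_smul X (exp (2 * π * I * m / N)) T (fun t ↦ by
    rw [star_mul_mul_sub_period hVper hU hXunitary, exp_mul_div_eq_mul_sub hT.ne', mul_smul_comm,
      smul_mul_assoc, smul_smul]) 0
  rw [zero_add] at hcov
  rw [mul_smul_comm, smul_mul_assoc, hcov, smul_comm]

/-- If `U₀(t + lT) = U₀(t) Xˡ` for a unitary `X` with `X^N = 1` and `V` is `T`-periodic, then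
the Fourier components `V_m = (1/NT) ∫₀^{NT} U₀(t)† V(t) U₀(t) e^{imωt/N} dt` (with `ω = 2π/T`)
satisfy `X V_m X⁻¹ = e^{2πim/N} V_m`. -/
theorem fourier_component_covariance {d : ℕ} (N : ℕ) (hN : 0 < N) (T : ℝ) (hT : 0 < T)
    (V U₀ : ℝ → (EuclideanSpace ℂ (Fin d) →L[ℂ] EuclideanSpace ℂ (Fin d)))
    (hVcont : Continuous V) (hVper : ∀ t, V (t + T) = V t)
    (X : (EuclideanSpace ℂ (Fin d) →L[ℂ] EuclideanSpace ℂ (Fin d))ˣ)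
    (hXunitary : star (X : EuclideanSpace ℂ (Fin d) →L[ℂ] EuclideanSpace ℂ (Fin d)) = ↑X⁻¹)
    (hXN : (X : EuclideanSpace ℂ (Fin d) →L[ℂ] EuclideanSpace ℂ (Fin d)) ^ N = 1)
    (hU₀ : ∀ t : ℝ, 0 ≤ t → t < T → ∀ l : ℤ,
      U₀ (t + l * T) = U₀ t * ((X ^ l : (EuclideanSpace ℂ (Fin d) →L[ℂ] EuclideanSpace ℂ (Fin d))ˣ) :
        EuclideanSpace ℂ (Fin d) →L[ℂ] EuclideanSpace ℂ (Fin d)))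
    (m : ℤ) :
    (X : EuclideanSpace ℂ (Fin d) →L[ℂ] EuclideanSpace ℂ (Fin d)) *
        ((1 / (N * T : ℂ)) • ∫ t in (0:ℝ)..(N * T),
          Complex.exp (I * m * (2 * π / T) * t / N) • (star (U₀ t) * V t * U₀ t)) * ↑X⁻¹ =
      Complex.exp (2 * π * I * m / N) •
        ((1 / (N * T : ℂ)) • ∫ t in (0:ℝ)..(N * T),
          Complex.exp (I * m * (2 * π / T) * t / N) • (star (U₀ t) * V t * U₀ t)) :=
  fourier_component_covariance_general N hN T hT V U₀ hVper X hXunitary hXN hU₀ m
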